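/- arXiv:2007.15504 — 4 statements merged into one kernel-verified Lean document; each statement's English description precedes it below -/
import Mathlib

section
/- If T is a ditree with minimum in-degree at least 1 and H is any digraph with minimum in-degree at least 1, then γ_t(T × H) = γ_t(T) · γ_t(H). -/
open SimpleGraph

variable {V W : Type*}

/-- The closed out-neighborhood of `v` in the digraph with arc relation `A`. -/
def NplusC (A : V → V → Prop) (v : V) : Set V := insert v {u | A v u}

/-- The closed in-neighborhood of `v`. -/
def NminusC (A : V → V → Prop) (v : V) : Set V := insert v {u | A u v}

/-- The open out-neighborhood of `v`. -/
def NplusO (A : V → V → Prop) (v : V) : Set V := {u | A v u}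

/-- The open in-neighborhood of `v`. -/
def NminusO (A : V → V → Prop) (v : V) : Set V := {u | A u v}

/-- `S` is a dominating set: every vertex is in a closed out-neighborhood of a member of `S`. -/
def IsDomSet (A : V → V → Prop) (S : Set V) : Prop := ∀ u, ∃ v ∈ S, u ∈ NplusC A v

/-- The domination number of a digraph. -/
noncomputable def domNum (V : Type*) [Fintype V] (A : V → V → Prop) : ℕ :=
  sInf {n | ∃ S : Set V, IsDomSet A S ∧ S.ncard = n}

/-- `P` is a packing: closed in-neighborhoods of members are pairwise disjoint. -/
def IsPacking (A : V → V → Prop) (P : Set V) : Prop :=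
  P.Pairwise fun x y => Disjoint (NminusC A x) (NminusC A y)

/-- The packing number of a digraph. -/
noncomputable def packNum (V : Type*) [Fintype V] (A : V → V → Prop) : ℕ :=
  sSup {n | ∃ P : Set V, IsPacking A P ∧ P.ncard = n}

/-- `S` is a total dominating set: every vertex has an in-neighbor in `S`. -/
def IsTotalDomSet (A : V → V → Prop) (S : Set V) : Prop := ∀ u, ∃ v ∈ S, A v u

/-- The total domination number of a digraph. -/
noncomputable def totalDomNum (V : Type*) [Fintype V] (A : V → V → Prop) : ℕ :=
  sInf {n | ∃ S : Set V, IsTotalDomSet A S ∧ S.ncard = n}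

/-- `P` is an open packing: open in-neighborhoods of members are pairwise disjoint. -/
def IsOpenPacking (A : V → V → Prop) (P : Set V) : Prop :=
  P.Pairwise fun x y => Disjoint (NminusO A x) (NminusO A y)

/-- The open packing number of a digraph. -/
noncomputable def openPackNum (V : Type*) [Fintype V] (A : V → V → Prop) : ℕ :=
  sSup {n | ∃ P : Set V, IsOpenPacking A P ∧ P.ncard = n}

/-- The underlying (simple) graph of a digraph. -/
def ugr (A : V → V → Prop) : SimpleGraph V := SimpleGraph.fromRel A

/-- A ditree is a digraph whose underlying graph is a tree. -/
def IsDitree (A : V → V → Prop) : Prop := (ugr A).IsTree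

/-- Arc relation of the Cartesian product of two digraphs. -/
def cartArc (A : V → V → Prop) (B : W → W → Prop) : V × W → V × W → Prop :=
  fun p q => (p.1 = q.1 ∧ B p.2 q.2) ∨ (p.2 = q.2 ∧ A p.1 q.1)

/-- Arc relation of the direct product of two digraphs. -/
def dirArc (A : V → V → Prop) (B : W → W → Prop) : V × W → V × W → Prop :=
  fun p q => A p.1 q.1 ∧ B p.2 q.2

/-- The closed in-neighborhood graph of a digraph: distinct vertices are adjacent iff
their closed in-neighborhoods intersect. -/
def Ncg (A : V → V → Prop) : SimpleGraph V :=
  SimpleGraph.fromRel (fun u v => (NminusC A u ∩ NminusC A v).Nonempty)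

/-- The open in-neighborhood graph of a digraph: distinct vertices are adjacent iff
their open in-neighborhoods intersect. -/
def Nog (A : V → V → Prop) : SimpleGraph V :=
  SimpleGraph.fromRel (fun u v => (NminusO A u ∩ NminusO A v).Nonempty)


/-!
Taking products of minimum total dominating sets gives `γ_t(T × H) ≤ γ_t(T) γ_t(H)`.
Conversely, if `P` is an open packing of `T` and `S` totally dominates `T × H`, then for each
`p ∈ P` the vertices of `S` whose first coordinate is an in-neighbour of `p` project onto a total
dominating set of `H`, and these fibres are pairwise disjoint; hence `|P| γ_t(H) ≤ |S|`. It
remains to see that a ditree has an open packing of size `γ_t(T)`. This follows greedily: take a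
vertex `u` of maximal distance from a fixed root among the vertices still to be dominated; all
of them that share an in-neighbour with `u` are dominated by a single vertex (the parent of `u`
when it is an in-neighbour of `u`), so one new dominating vertex pays for one new packing vertex.
-/

theorem totalDomNum_le_card [Fintype V] {A : V → V → Prop} {S : Finset V}
    (hS : IsTotalDomSet A ↑S) : totalDomNum V A ≤ S.card :=
  Nat.sInf_le ⟨S, hS, Set.ncard_coe_finset S⟩

theorem exists_isTotalDomSet_card_eq_totalDomNum [Fintype V] {A : V → V → Prop}
    (hdA : ∀ v, ∃ u, A u v) :
    ∃ S : Finset V, IsTotalDomSet A ↑S ∧ S.card = totalDomNum V A := by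
  classical
  have huniv : IsTotalDomSet A Set.univ := fun v =>
    (hdA v).imp fun u hu => ⟨Set.mem_univ u, hu⟩
  obtain ⟨S, hS, hcard⟩ : ∃ S : Set V, IsTotalDomSet A S ∧ S.ncard = totalDomNum V A :=
    Nat.sInf_mem (s := {n | ∃ S : Set V, IsTotalDomSet A S ∧ S.ncard = n})
      ⟨_, _, huniv, rfl⟩
  exact ⟨S.toFinset, by rwa [Set.coe_toFinset], by rw [← Set.ncard_eq_toFinset_card', hcard]⟩

theorem IsTotalDomSet.product {A : V → V → Prop}
    {B : W → W → Prop} {S : Finset V} {S' : Finset W} (hS : IsTotalDomSet A ↑S)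
    (hS' : IsTotalDomSet B ↑S') : IsTotalDomSet (dirArc A B) ↑(S ×ˢ S') := by
  rintro ⟨v, w⟩
  obtain ⟨a, ha, hav⟩ := hS v
  obtain ⟨b, hb, hbw⟩ := hS' w
  exact ⟨(a, b), Finset.mem_product.2 ⟨ha, hb⟩, hav, hbw⟩

theorem totalDomNum_dirArc_le [Fintype V] [Fintype W] {A : V → V → Prop} {B : W → W → Prop}
    (hdA : ∀ v, ∃ u, A u v) (hdB : ∀ w, ∃ u, B u w) :
    totalDomNum (V × W) (dirArc A B) ≤ totalDomNum V A * totalDomNum W B := by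
  obtain ⟨S, hS, hScard⟩ := exists_isTotalDomSet_card_eq_totalDomNum hdA
  obtain ⟨S', hS', hS'card⟩ := exists_isTotalDomSet_card_eq_totalDomNum hdB
  calc totalDomNum (V × W) (dirArc A B) ≤ (S ×ˢ S').card :=
        totalDomNum_le_card (hS.product hS')
    _ = totalDomNum V A * totalDomNum W B := by rw [Finset.card_product, hScard, hS'card]

theorem IsOpenPacking.card_mul_totalDomNum_le [Fintype W] {A : V → V → Prop}
    {B : W → W → Prop} {P : Finset V} (hP : IsOpenPacking A ↑P) {S : Finset (V × W)}
    (hS : IsTotalDomSet (dirArc A B) ↑S) : P.card * totalDomNum W B ≤ S.card := by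
  classical
  let fibre : V → Finset (V × W) := fun p => S.filter fun q => A q.1 p
  have hfibre : ∀ p, totalDomNum W B ≤ (fibre p).card := fun p => by
    have hdom : IsTotalDomSet B ↑((fibre p).image Prod.snd) := fun w => by
      obtain ⟨q, hq, hqp, hqw⟩ := hS (p, w)
      exact ⟨q.2, Finset.mem_image_of_mem _ (Finset.mem_filter.2 ⟨hq, hqp⟩), hqw⟩
    exact (totalDomNum_le_card hdom).trans Finset.card_image_le
  have hdisj : (↑P : Set V).PairwiseDisjoint fibre := fun p hp p' hp' hne =>
    Finset.disjoint_filter.2 fun q _ hqp hqp' =>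
      Set.disjoint_left.1 (hP hp hp' hne) hqp hqp'
  calc P.card * totalDomNum W B ≤ ∑ p ∈ P, (fibre p).card := by
        simpa using P.card_nsmul_le_sum _ _ fun p _ => hfibre p
    _ = (P.biUnion fibre).card := (Finset.card_biUnion hdisj).symm
    _ ≤ S.card :=
        Finset.card_le_card (Finset.biUnion_subset.2 fun _ _ => Finset.filter_subset _ _)

theorem exists_isOpenPacking_subset_of_forall_exists_common_dominator {A : V → V → Prop}
    (h : ∀ U : Finset V, U.Nonempty → ∃ u ∈ U, ∃ s, A s u ∧
      ∀ v ∈ U, (NminusO A u ∩ NminusO A v).Nonempty → A s v)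
    (U : Finset V) : ∃ S P : Finset V, P ⊆ U ∧ IsOpenPacking A ↑P ∧
      (∀ v ∈ U, ∃ s ∈ S, A s v) ∧ S.card ≤ P.card := by
  classical
  induction U using Finset.strongInduction with
  | H U ih =>
  rcases U.eq_empty_or_nonempty with rfl | hU
  · exact ⟨∅, ∅, subset_rfl, by simp [IsOpenPacking], by simp, le_rfl⟩
  obtain ⟨u, hu, s, hsu, hs⟩ := h U hU
  let U' := U.filter fun v => Disjoint (NminusO A u) (NminusO A v)
  have hu' : u ∉ U' := fun hu' =>
    Set.disjoint_left.1 (Finset.mem_filter.1 hu').2 (show s ∈ NminusO A u from hsu) hsu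
  have hU' : U' ⊂ U := Finset.ssubset_iff_subset_ne.2
    ⟨Finset.filter_subset _ _, fun heq => hu' (heq ▸ hu)⟩
  obtain ⟨S, P, hPU', hP, hSdom, hcard⟩ := ih U' hU'
  refine ⟨insert s S, insert u P, Finset.insert_subset hu (hPU'.trans (Finset.filter_subset _ _)),
    ?_, ?_, ?_⟩
  · rw [Finset.coe_insert]
    exact Set.PairwiseDisjoint.insert hP fun v hv _ => (Finset.mem_filter.1 (hPU' hv)).2
  · intro v hv
    by_cases hvU' : v ∈ U'
    · obtain ⟨t, ht, htv⟩ := hSdom v hvU'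
      exact ⟨t, Finset.mem_insert_of_mem ht, htv⟩
    · have hshare : (NminusO A u ∩ NminusO A v).Nonempty :=
        Set.not_disjoint_iff_nonempty_inter.1 fun hd => hvU' (Finset.mem_filter.2 ⟨hv, hd⟩)
      exact ⟨s, Finset.mem_insert_self _ _, hs v hv hshare⟩
  · rw [Finset.card_insert_of_notMem fun h => hu' (hPU' h)]
    exact (Finset.card_insert_le _ _).trans (Nat.succ_le_succ hcard)

theorem exists_isOpenPacking_totalDomNum_le_card [Fintype V] {A : V → V → Prop}
    (h : ∀ U : Finset V, U.Nonempty → ∃ u ∈ U, ∃ s, A s u ∧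
      ∀ v ∈ U, (NminusO A u ∩ NminusO A v).Nonempty → A s v) :
    ∃ P : Finset V, IsOpenPacking A ↑P ∧ totalDomNum V A ≤ P.card := by
  classical
  obtain ⟨S, P, -, hP, hS, hcard⟩ :=
    exists_isOpenPacking_subset_of_forall_exists_common_dominator h Finset.univ
  exact ⟨P, hP, (totalDomNum_le_card fun v => hS v (Finset.mem_univ v)).trans hcard⟩

theorem SimpleGraph.IsTree.eq_of_adj_of_dist_add_one_eq {G : SimpleGraph V} (hG : G.IsTree)
    (r : V) {u x y : V} (hx : G.Adj x u) (hy : G.Adj y u) (hxd : G.dist r x + 1 = G.dist r u)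
    (hyd : G.dist r y + 1 = G.dist r u) : x = y := by
  classical
  obtain ⟨q, hq, hqlen⟩ := (hG.connected r u).exists_path_of_dist
  suffices hmem : ∀ z, G.Adj z u → G.dist r z + 1 = G.dist r u → z ∈ q.support by
    rw [hG.isAcyclic.eq_penultimate_of_adj_end hq hx.symm (hmem x hx hxd),
      hG.isAcyclic.eq_penultimate_of_adj_end hq hy.symm (hmem y hy hyd)]
  intro z hz hzd
  by_contra hzq
  obtain ⟨p, hp, hplen⟩ := (hG.connected r z).exists_path_of_dist
  have hup : u ∈ p.support :=
    hG.isAcyclic.mem_support_of_ne_mem_support_of_adj_of_isPath hp hq hz hzq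
  have : G.dist r u ≤ G.dist r z := calc
    G.dist r u ≤ (p.takeUntil u hup).length := dist_le _
    _ ≤ p.length := p.length_takeUntil_le_length hup
    _ = G.dist r z := hplen
  omega

theorem IsDitree.exists_common_dominator_of_forall_dist_le {A : V → V → Prop}
    (hirr : ∀ v, ¬ A v v) (hT : IsDitree A) (hdA : ∀ v, ∃ u, A u v) (r : V) {U : Finset V}
    {u : V} (hu : ∀ v ∈ U, (ugr A).dist r v ≤ (ugr A).dist r u) :
    ∃ s, A s u ∧ ∀ v ∈ U, (NminusO A u ∩ NminusO A v).Nonempty → A s v := by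
  have hadj : ∀ {x y}, A x y → (ugr A).Adj x y := fun {x y} hxy =>
    (fromRel_adj A x y).2 ⟨fun h => hirr x (h ▸ hxy), Or.inl hxy⟩
  -- were `x` a child of `u`, the vertex `v` would be a second parent of `x` or deeper than `u`
  have hparent : ∀ v ∈ U, v ≠ u → ∀ x, A x u → A x v →
      (ugr A).dist r x + 1 = (ugr A).dist r u := by
    intro v hv hvu x hxu hxv
    have hvd := hu v hv
    rcases hT.dist_eq_dist_add_one_of_adj r (hadj hxu) with hxd | hxd
    · rcases hT.dist_eq_dist_add_one_of_adj r (hadj hxv) with hxd' | hxd'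
      · exact absurd (hT.eq_of_adj_of_dist_add_one_eq r (hadj hxv).symm (hadj hxu).symm
          (by omega) (by omega)) hvu
      · omega
    · exact hxd.symm
  by_cases hp : ∃ p, A p u ∧ (ugr A).dist r p + 1 = (ugr A).dist r u
  · obtain ⟨p, hpu, hpd⟩ := hp
    refine ⟨p, hpu, fun v hv ⟨x, hxu, hxv⟩ => ?_⟩
    rcases eq_or_ne v u with rfl | hvu
    · exact hpu
    · rwa [← hT.eq_of_adj_of_dist_add_one_eq r (hadj hxu) (hadj hpu)
        (hparent v hv hvu x hxu hxv) hpd]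
  · obtain ⟨s, hsu⟩ := hdA u
    refine ⟨s, hsu, fun v hv ⟨x, hxu, hxv⟩ => ?_⟩
    rcases eq_or_ne v u with rfl | hvu
    · exact hsu
    · exact absurd ⟨x, hxu, hparent v hv hvu x hxu hxv⟩ hp

theorem IsDitree.exists_isOpenPacking_totalDomNum_le_card [Fintype V] {A : V → V → Prop}
    (hirr : ∀ v, ¬ A v v) (hT : IsDitree A) (hdA : ∀ v, ∃ u, A u v) :
    ∃ P : Finset V, IsOpenPacking A ↑P ∧ totalDomNum V A ≤ P.card := by
  refine _root_.exists_isOpenPacking_totalDomNum_le_card fun U hU => ?_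
  obtain ⟨r, hr⟩ := hU
  obtain ⟨u, hu, hmax⟩ := U.exists_max_image ((ugr A).dist r) ⟨r, hr⟩
  exact ⟨u, hu, hT.exists_common_dominator_of_forall_dist_le hirr hdA r hmax⟩

theorem stmt4_general {V W : Type*} [Fintype V] [Fintype W]
    (A : V → V → Prop) (B : W → W → Prop)
    (hirrA : ∀ v, ¬ A v v)
    (hT : IsDitree A)
    (hdA : ∀ v : V, ∃ u, A u v) (hdB : ∀ w : W, ∃ u, B u w) :
    totalDomNum (V × W) (dirArc A B) = totalDomNum V A * totalDomNum W B := by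
  have hdAB : ∀ q : V × W, ∃ p, dirArc A B p q := fun ⟨v, w⟩ =>
    let ⟨a, ha⟩ := hdA v
    let ⟨b, hb⟩ := hdB w
    ⟨(a, b), ha, hb⟩
  obtain ⟨S, hS, hScard⟩ := exists_isTotalDomSet_card_eq_totalDomNum hdAB
  obtain ⟨P, hP, hPcard⟩ := hT.exists_isOpenPacking_totalDomNum_le_card hirrA hdA
  refine le_antisymm (totalDomNum_dirArc_le hdA hdB) ?_
  calc totalDomNum V A * totalDomNum W B ≤ P.card * totalDomNum W B :=
        Nat.mul_le_mul_right _ hPcard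
    _ ≤ S.card := hP.card_mul_totalDomNum_le hS
    _ = totalDomNum (V × W) (dirArc A B) := hScard

theorem stmt4 {V W : Type*} [Fintype V] [Fintype W]
    (A : V → V → Prop) (B : W → W → Prop)
    (hirrA : ∀ v, ¬ A v v) (hirrB : ∀ w, ¬ B w w)
    (hT : IsDitree A)
    (hdA : ∀ v : V, ∃ u, A u v) (hdB : ∀ w : W, ∃ u, B u w) :
    totalDomNum (V × W) (dirArc A B) = totalDomNum V A * totalDomNum W B :=
  stmt4_general A B hirrA hT hdA hdB
end

section
/- If T is a ditree and H is any digraph, then γ(T □ H) ≥ γ(T) · γ(H) (every ditree satisfies Vizing's inequality). -/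
/-!
A packing `P` of `T` (vertices with pairwise disjoint closed in-neighbourhoods) gives
`γ(T □ H) ≥ |P| γ(H)`: the members of a dominating set of `T □ H` lying over `N⁻[p]`, `p ∈ P`,
project onto a dominating set of `H`, and they are disjoint for distinct `p`. It remains to see
that a diforest has a packing as large as some dominating set. Take a vertex `x` with at most one
neighbour `v`. If `x` is already dominated, delete it. Otherwise pack `x`, put its dominator
`d` (`v` if `v → x`, else `x` itself) into the dominating set, delete `x` and `d`, and declare
the out-neighbours of `d` dominated and unpackable.
-/

open SimpleGraph

variable {V W : Type*}

theorem SimpleGraph.IsAcyclic.exists_forall_adj_eq {G : SimpleGraph V} [Finite V] [Nonempty V]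
    (hG : G.IsAcyclic) : ∃ x v, ∀ y, G.Adj x y → y = v := by
  obtain ⟨u, _, p, hp, hmax⟩ := Walk.exists_isPath_forall_isPath_length_le_length G
  refine ⟨u, p.snd, fun w hw => hG.eq_snd_of_adj_start hp hw ?_⟩
  by_contra hwp
  have := hmax _ _ _ (hp.cons hwp (h := hw.symm))
  simp at this

theorem SimpleGraph.IsAcyclic.exists_mem_forall_adj_eq {G : SimpleGraph V} [Finite V]
    (hG : G.IsAcyclic) {U : Set V} (hU : U.Nonempty) :
    ∃ x ∈ U, ∃ v, ∀ y ∈ U, G.Adj x y → y = v := by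
  have : Nonempty U := hU.to_subtype
  obtain ⟨x, v, hxv⟩ := (hG.induce U).exists_forall_adj_eq
  exact ⟨x, x.2, v, fun y hy hxy => congrArg Subtype.val (hxv ⟨y, hy⟩ hxy)⟩

section Domination

variable {A : V → V → Prop}

lemma mem_NminusC_iff_mem_NplusC {x z : V} : z ∈ NminusC A x ↔ x ∈ NplusC A z := by
  simp [NminusC, NplusC, eq_comm]

lemma isPacking_of_subsingleton {P : Set V} (hP : ∀ z, (P ∩ NplusC A z).Subsingleton) :
    IsPacking A P := fun _ hx _ hy hxy =>
  Set.disjoint_left.2 fun _ hzx hzy =>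
    hxy (hP _ ⟨hx, mem_NminusC_iff_mem_NplusC.1 hzx⟩ ⟨hy, mem_NminusC_iff_mem_NplusC.1 hzy⟩)

/-- Invariant of the induction over subforests `U`: `M` collects vertices that are already
dominated and may not be packed. -/
def DomLePack (A : V → V → Prop) (U M : Set V) : Prop :=
  ∃ D P : Set V, P ⊆ U \ M ∧ (∀ z ∈ U, (P ∩ NplusC A z).Subsingleton) ∧
    (∀ y ∈ U \ M, ∃ d ∈ D, y ∈ NplusC A d) ∧ D.ncard ≤ P.ncard

lemma domLePack_empty (M : Set V) : DomLePack A ∅ M :=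
  ⟨∅, ∅, by simp, by simp, by simp, le_rfl⟩

lemma DomLePack.of_diff_singleton {U M : Set V} {x v : V} (hxM : x ∈ M)
    (hout : ∀ y ∈ U, y ≠ x → A x y → y = v) (h : DomLePack A (U \ {x}) M) :
    DomLePack A U M := by
  obtain ⟨D, P, hPU, hP, hD, hcard⟩ := h
  refine ⟨D, P, fun p hp => ?_, fun z hz => ?_, fun y hy => hD y ?_, hcard⟩
  · exact ⟨(hPU hp).1.1, (hPU hp).2⟩
  · by_cases hzx : z = x
    · subst hzx
      rintro a ⟨ha, hza⟩ b ⟨hb, hzb⟩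
      have hne : ∀ {p}, p ∈ P → p ≠ z := fun hp => (hPU hp).1.2
      obtain rfl | hza := hza; · exact absurd rfl (hne ha)
      obtain rfl | hzb := hzb; · exact absurd rfl (hne hb)
      rw [hout a (hPU ha).1.1 (hne ha) hza, hout b (hPU hb).1.1 (hne hb) hzb]
    · exact hP z ⟨hz, hzx⟩
  · exact ⟨⟨hy.1, fun hyx => hy.2 (hyx ▸ hxM)⟩, hy.2⟩

lemma DomLePack.of_diff_pair [Finite V] {U M : Set V} {x d : V} (hx : x ∈ U \ M)
    (hdx : x ∈ NplusC A d) (hin : ∀ z ∈ U, A z x → z = x ∨ z = d)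
    (hout : ∀ y ∈ U, A x y → y = x ∨ y ∈ NplusC A d)
    (h : DomLePack A (U \ {x, d}) (M ∪ NplusC A d)) : DomLePack A U M := by
  obtain ⟨D, P, hPU, hP, hD, hcard⟩ := h
  have hxP : x ∉ P := fun hxP => (hPU hxP).1.2 (.inl rfl)
  have hsep : ∀ z ∈ U, ∀ p ∈ P, p ∈ NplusC A z → z ∉ ({x, d} : Set V) := by
    rintro z hz p hp hzp (rfl | rfl)
    · obtain ⟨⟨hpU, hpxd⟩, hpM⟩ := hPU hp
      obtain rfl | hzp := hzp; · exact hpxd (.inl rfl)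
      obtain rfl | hpd := hout p hpU hzp; · exact hpxd (.inl rfl)
      exact hpM (.inr hpd)
    · exact (hPU hp).2 (.inr hzp)
  refine ⟨insert d D, insert x P, Set.insert_subset hx fun p hp => ?_, fun z hz => ?_,
    fun y hy => ?_, ?_⟩
  · obtain ⟨⟨hpU, -⟩, hpM⟩ := hPU hp
    exact ⟨hpU, fun h => hpM (.inl h)⟩
  · by_cases hzxd : z ∈ ({x, d} : Set V)
    · refine (Set.subsingleton_singleton (a := x)).anti fun p ⟨hp, hzp⟩ => ?_
      obtain rfl | hp := hp; · rfl
      exact absurd hzxd (hsep z hz p hp hzp)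
    · have hzx : x ∉ NplusC A z := by
        rintro (rfl | hzx)
        · exact hzxd (.inl rfl)
        · obtain rfl | rfl := hin z hz hzx <;> simp at hzxd
      refine (hP z ⟨hz, hzxd⟩).anti fun p ⟨hp, hzp⟩ => ?_
      obtain rfl | hp := hp; · exact absurd hzp hzx
      exact ⟨hp, hzp⟩
  · by_cases hyd : y ∈ NplusC A d
    · exact ⟨d, Set.mem_insert _ _, hyd⟩
    · have hyxd : y ∉ ({x, d} : Set V) := by
        rintro (rfl | rfl)
        · exact hyd hdx
        · exact hyd (Set.mem_insert _ _)
      obtain ⟨e, he, hye⟩ := hD y ⟨⟨hy.1, hyxd⟩, fun h => h.elim hy.2 hyd⟩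
      exact ⟨e, Set.mem_insert_of_mem _ he, hye⟩
  · calc (insert d D).ncard ≤ D.ncard + 1 := Set.ncard_insert_le _ _
      _ ≤ P.ncard + 1 := by omega
      _ = (insert x P).ncard := (Set.ncard_insert_of_notMem hxP).symm

theorem domLePack_of_isAcyclic [Finite V] (hA : (ugr A).IsAcyclic) (U M : Set V) :
    DomLePack A U M := by
  induction U using WellFoundedLT.induction generalizing M with
  | ind U ih =>
  rcases U.eq_empty_or_nonempty with rfl | hU
  · exact domLePack_empty M
  obtain ⟨x, hxU, v, hleaf⟩ := hA.exists_mem_forall_adj_eq hU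
  have hnbr : ∀ y ∈ U, y ≠ x → A x y ∨ A y x → y = v := fun y hy hyx hxy =>
    hleaf y hy ((fromRel_adj A x y).2 ⟨hyx.symm, hxy⟩)
  have hdiff : ∀ {d : V}, U \ {x, d} < U := fun {_} =>
    Set.sdiff_ssubset_left_iff.2 ⟨x, hxU, .inl rfl⟩
  by_cases hxM : x ∈ M
  · exact .of_diff_singleton hxM (fun y hy hyx h => hnbr y hy hyx (.inl h))
      (ih _ (Set.sdiff_singleton_ssubset.2 hxU) M)
  by_cases hvx : A v x
  · refine .of_diff_pair ⟨hxU, hxM⟩ (Set.mem_insert_of_mem _ hvx) (fun z hz hzx => ?_)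
      (fun y hy hxy => ?_) (ih _ hdiff _)
    · exact (eq_or_ne z x).imp_right fun hne => hnbr z hz hne (.inr hzx)
    · exact (eq_or_ne y x).imp_right fun hne => hnbr y hy hne (.inl hxy) ▸ Set.mem_insert _ _
  · refine .of_diff_pair ⟨hxU, hxM⟩ (Set.mem_insert _ _) (fun z hz hzx => .inl ?_)
      (fun y _ hxy => .inr (Set.mem_insert_of_mem _ hxy)) (ih _ hdiff _)
    by_contra hne
    exact hvx (hnbr z hz hne (.inr hzx) ▸ hzx)

section Numbers

variable [Fintype V]

lemma domNum_le_ncard {D : Set V} (hD : IsDomSet A D) : domNum V A ≤ D.ncard :=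
  Nat.sInf_le ⟨D, hD, rfl⟩

lemma exists_isDomSet_ncard_eq_domNum (A : V → V → Prop) :
    ∃ S, IsDomSet A S ∧ S.ncard = domNum V A :=
  Nat.sInf_mem (s := {n | ∃ S : Set V, IsDomSet A S ∧ S.ncard = n})
    ⟨_, Set.univ, fun u => ⟨u, trivial, Set.mem_insert u _⟩, rfl⟩

lemma bddAbove_ncard_isPacking (A : V → V → Prop) :
    BddAbove {n | ∃ P : Set V, IsPacking A P ∧ P.ncard = n} := by
  refine ⟨Nat.card V, ?_⟩
  rintro _ ⟨P, -, rfl⟩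
  exact Set.ncard_le_card P

lemma ncard_le_packNum {P : Set V} (hP : IsPacking A P) : P.ncard ≤ packNum V A :=
  le_csSup (bddAbove_ncard_isPacking A) ⟨P, hP, rfl⟩

lemma exists_isPacking_ncard_eq_packNum (A : V → V → Prop) :
    ∃ P, IsPacking A P ∧ P.ncard = packNum V A :=
  Nat.sSup_mem (s := {n | ∃ P : Set V, IsPacking A P ∧ P.ncard = n})
    ⟨0, ∅, fun _ h => h.elim, Set.ncard_empty V⟩ (bddAbove_ncard_isPacking A)

theorem domNum_le_packNum_of_isAcyclic (hA : (ugr A).IsAcyclic) : domNum V A ≤ packNum V A := by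
  obtain ⟨D, P, -, hP, hD, hcard⟩ := domLePack_of_isAcyclic hA Set.univ ∅
  calc domNum V A ≤ D.ncard := domNum_le_ncard fun u => hD u ⟨trivial, id⟩
    _ ≤ P.ncard := hcard
    _ ≤ packNum V A := ncard_le_packNum (isPacking_of_subsingleton fun z => hP z trivial)

end Numbers

end Domination

section CartesianProduct

variable {A : V → V → Prop} {B : W → W → Prop}

lemma IsDomSet.image_snd_cartArc {S : Set (V × W)} (hS : IsDomSet (cartArc A B) S) (p : V) :
    IsDomSet B (Prod.snd '' {s ∈ S | s.1 ∈ NminusC A p}) := by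
  intro y
  obtain ⟨⟨g, h⟩, hgh, hmem⟩ := hS (p, y)
  have key : g ∈ NminusC A p ∧ y ∈ NplusC B h := by
    simp only [NplusC, NminusC, cartArc, Set.mem_insert_iff, Set.mem_ofPred_eq,
      Prod.mk.injEq] at hmem ⊢
    rcases hmem with ⟨rfl, rfl⟩ | ⟨rfl, hB⟩ | ⟨rfl, hA⟩ <;> simp_all
  exact ⟨h, ⟨(g, h), ⟨hgh, key.1⟩, rfl⟩, key.2⟩

theorem packNum_mul_domNum_le_domNum_cartArc [Fintype V] [Fintype W]
    (A : V → V → Prop) (B : W → W → Prop) :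
    packNum V A * domNum W B ≤ domNum (V × W) (cartArc A B) := by
  obtain ⟨P, hP, hPcard⟩ := exists_isPacking_ncard_eq_packNum A
  obtain ⟨S, hS, hScard⟩ := exists_isDomSet_ncard_eq_domNum (cartArc A B)
  set fiber : V → Set (V × W) := fun p => {s ∈ S | s.1 ∈ NminusC A p}
  have hfiber : ∀ p, domNum W B ≤ (fiber p).ncard := fun p =>
    (domNum_le_ncard (hS.image_snd_cartArc p)).trans (Set.ncard_image_le (Set.toFinite _))
  have hdisj : P.PairwiseDisjoint fiber := fun p hp q hq hpq =>
    Set.disjoint_left.2 fun s hsp hsq => Set.disjoint_left.1 (hP hp hq hpq) hsp.2 hsq.2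
  rw [← hPcard, ← hScard, Set.ncard_eq_toFinset_card P]
  calc P.toFinite.toFinset.card * domNum W B
      ≤ ∑ p ∈ P.toFinite.toFinset, (fiber p).ncard := by
        simpa using Finset.card_nsmul_le_sum _ _ _ fun p _ => hfiber p
    _ = (⋃ p ∈ P, fiber p).ncard := by
        rw [P.toFinite.ncard_biUnion (fun _ _ => Set.toFinite _) hdisj,
          finsum_mem_eq_finite_toFinset_sum _ P.toFinite]
    _ ≤ S.ncard := Set.ncard_le_ncard (Set.iUnion₂_subset fun _ _ => Set.sep_subset _ _)

end CartesianProduct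

theorem stmt6_general {V W : Type*} [Fintype V] [Fintype W]
    (A : V → V → Prop) (B : W → W → Prop)
    (hT : IsDitree A) :
    domNum (V × W) (cartArc A B) ≥ domNum V A * domNum W B :=
  calc domNum V A * domNum W B ≤ packNum V A * domNum W B :=
        Nat.mul_le_mul_right _ (domNum_le_packNum_of_isAcyclic hT.isAcyclic)
    _ ≤ domNum (V × W) (cartArc A B) := packNum_mul_domNum_le_domNum_cartArc A B

theorem stmt6 {V W : Type*} [Fintype V] [Fintype W]
    (A : V → V → Prop) (B : W → W → Prop)
    (hirrA : ∀ v, ¬ A v v) (hirrB : ∀ w, ¬ B w w)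
    (hT : IsDitree A) :
    domNum (V × W) (cartArc A B) ≥ domNum V A * domNum W B :=
  stmt6_general A B hT
end

section
/- For every ditree T in which every vertex has in-degree at least 1, the open in-neighborhood graph N_o⁻(T) is a chordal graph (every cycle of length at least 4 has a chord). -/
open SimpleGraph

variable {V W : Type*}

namespace SimpleGraph

variable {V : Type*} {G : SimpleGraph V}

namespace Walk.IsCycle

lemma snd_penultimate_notMem_edges {u : V} {c : G.Walk u u} (hc : c.IsCycle)
    (hlen : 4 ≤ c.length) : s(c.snd, c.penultimate) ∉ c.edges := by
  intro hmem
  rw [← adj_toSubgraph_iff_mem_edges, ← Subgraph.mem_neighborSet,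
    hc.neighborSet_toSubgraph_internal one_ne_zero (by omega)] at hmem
  rcases hmem with h | h
  · exact (c.adj_penultimate hc.not_nil).ne (by simpa using h)
  · have : c.length - 1 = 2 :=
      hc.getVert_injOn (⟨by omega, by omega⟩ : 1 ≤ c.length - 1 ∧ _)
        (⟨by omega, by omega⟩ : 1 ≤ 2 ∧ _) h
    omega

lemma exists_adj_adj_notMem_edges [DecidableEq V] {v u : V} {c : G.Walk v v} (hc : c.IsCycle)
    (hlen : 4 ≤ c.length) (hu : u ∈ c.support) :
    ∃ x y, x ∈ c.support ∧ y ∈ c.support ∧ G.Adj u x ∧ G.Adj u y ∧ x ≠ y ∧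
      s(x, y) ∉ c.edges := by
  set c' := c.rotate u hu
  have hc' : c'.IsCycle := hc.rotate hu
  refine ⟨c'.snd, c'.penultimate, ?_, ?_, c'.adj_snd hc'.not_nil,
    (c'.adj_penultimate hc'.not_nil).symm, hc'.snd_ne_penultimate, ?_⟩
  · exact (c.mem_support_rotate_iff u hu).mp (c'.getVert_mem_support 1)
  · exact (c.mem_support_rotate_iff u hu).mp (c'.getVert_mem_support _)
  · rw [← (c.rotate_edges u hu).perm.mem_iff]
    exact hc'.snd_penultimate_notMem_edges (by rwa [Walk.length_rotate])

end Walk.IsCycle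

namespace IsTree

lemma eq_of_adj_of_dist_add_one (hG : G.IsTree) (r : V) {b w₁ w₂ : V} (h₁ : G.Adj w₁ b)
    (h₂ : G.Adj w₂ b) (hd₁ : G.dist r w₁ + 1 = G.dist r b)
    (hd₂ : G.dist r w₂ + 1 = G.dist r b) : w₁ = w₂ := by
  have exists_path_penultimate : ∀ {w} (h : G.Adj w b), G.dist r w + 1 = G.dist r b →
      ∃ p : G.Walk r b, p.IsPath ∧ p.penultimate = w := by
    intro w h hd
    obtain ⟨q, -, hq⟩ := (hG.connected r w).exists_path_of_dist
    exact ⟨q.concat h, (q.concat h).isPath_of_length_eq_dist (by simp [hq, hd]),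
      q.penultimate_concat h⟩
  obtain ⟨p₁, hp₁, rfl⟩ := exists_path_penultimate h₁ hd₁
  obtain ⟨p₂, hp₂, rfl⟩ := exists_path_penultimate h₂ hd₂
  rw [(hG.existsUnique_path r b).unique hp₁ hp₂]

lemma dist_add_one_of_adj_of_adj (hG : G.IsTree) (r : V) {u w z : V} (hu : G.Adj w u)
    (hz : G.Adj w z) (hzu : z ≠ u) (hd : G.dist r z ≤ G.dist r u) :
    G.dist r w + 1 = G.dist r u := by
  rcases hG.dist_eq_dist_add_one_of_adj r hu with h | h
  · rcases hG.dist_eq_dist_add_one_of_adj r hz with h' | h'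
    · exact absurd (hG.eq_of_adj_of_dist_add_one r hz.symm hu.symm h'.symm h.symm) hzu
    · omega
  · exact h.symm

end IsTree

end SimpleGraph

lemma nog_adj_iff {V : Type*} {A : V → V → Prop} {a b : V} :
    (Nog A).Adj a b ↔ a ≠ b ∧ ∃ w, A w a ∧ A w b := by
  simp only [Nog, fromRel_adj, NminusO, Set.Nonempty, Set.mem_inter_iff, Set.mem_ofPred_eq]
  grind

lemma ugr_adj_of_arc {V : Type*} {A : V → V → Prop} (hirr : ∀ v, ¬ A v v) {a b : V}
    (h : A a b) : (ugr A).Adj a b :=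
  (fromRel_adj A a b).mpr ⟨fun hab => hirr b (hab ▸ h), Or.inl h⟩

theorem stmt11_general {V : Type*} (A : V → V → Prop)
    (hirr : ∀ v, ¬ A v v) (hT : IsDitree A) :
    ∀ (v : V) (c : (Nog A).Walk v v), c.IsCycle → 4 ≤ c.length →
      ∃ x y : V, x ∈ c.support ∧ y ∈ c.support ∧ (Nog A).Adj x y ∧ s(x, y) ∉ c.edges := by
  intro v c hc hlen
  classical
  have hT : (ugr A).IsTree := hT
  -- Root the tree at `v` and take a cycle vertex `u` farthest from it: the in-neighbours that `u`
  -- shares with its two cycle-neighbours are both forced to be the parent of `u`.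
  obtain ⟨u, hu, hmax⟩ :=
    c.support.toFinset.exists_max_image ((ugr A).dist v) ⟨v, by simp⟩
  rw [List.mem_toFinset] at hu
  obtain ⟨x, y, hx, hy, hux, huy, hxy, hxy_edges⟩ := hc.exists_adj_adj_notMem_edges hlen hu
  obtain ⟨-, w₁, hw₁u, hw₁x⟩ := nog_adj_iff.mp hux
  obtain ⟨-, w₂, hw₂u, hw₂y⟩ := nog_adj_iff.mp huy
  have harc : ∀ {a b}, A a b → (ugr A).Adj a b := ugr_adj_of_arc hirr
  have hw₁ := hT.dist_add_one_of_adj_of_adj v (harc hw₁u) (harc hw₁x) hux.ne'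
    (hmax x (by simpa))
  have hw₂ := hT.dist_add_one_of_adj_of_adj v (harc hw₂u) (harc hw₂y) huy.ne'
    (hmax y (by simpa))
  obtain rfl := hT.eq_of_adj_of_dist_add_one v (harc hw₁u) (harc hw₂u) hw₁ hw₂
  exact ⟨x, y, hx, hy, nog_adj_iff.mpr ⟨hxy, w₁, hw₁x, hw₂y⟩, hxy_edges⟩

theorem stmt11 {V : Type*} [Fintype V] (A : V → V → Prop)
    (hirr : ∀ v, ¬ A v v) (hT : IsDitree A)
    (hdeg : ∀ v : V, ∃ u, A u v) :
    ∀ (v : V) (c : (Nog A).Walk v v), c.IsCycle → 4 ≤ c.length →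
      ∃ x y : V, x ∈ c.support ∧ y ∈ c.support ∧ (Nog A).Adj x y ∧ s(x, y) ∉ c.edges :=
  stmt11_general A hirr hT
end

section
/- Let C be the orientation C₄^{(0,2,0,2)} of the 4-cycle: the digraph with vertex set {u, p, v, q} and arc set {(u,p), (u,q), (v,p), (v,q)}. If G is a digraph whose vertex set can be partitioned into two minimum dominating sets (two disjoint dominating sets each of size γ(G) whose union is V(G)), then γ(G □ C) = γ(G) · γ(C) = 2·γ(G). -/
open SimpleGraph

variable {V W : Type*}

/-- The orientation `C₄^{(0,2,0,2)}` of the 4-cycle: vertices `u = 0`, `p = 1`, `v = 2`,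
`q = 3`, arcs `(u,p), (u,q), (v,p), (v,q)`. -/
def C4Arc : Fin 4 → Fin 4 → Prop :=
  fun a b => (a = 0 ∧ b = 1) ∨ (a = 0 ∧ b = 3) ∨ (a = 2 ∧ b = 1) ∨ (a = 2 ∧ b = 3)

lemma domSet_univ (A : V → V → Prop) : IsDomSet A Set.univ :=
  fun u => ⟨u, Set.mem_univ u, Set.mem_insert u _⟩

lemma domNum_le {V : Type*} [Fintype V] (A : V → V → Prop) {S : Set V}
    (h : IsDomSet A S) : domNum V A ≤ S.ncard :=
  Nat.sInf_le ⟨S, h, rfl⟩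

lemma le_domNum {V : Type*} [Fintype V] (A : V → V → Prop) {n : ℕ}
    (h : ∀ S : Set V, IsDomSet A S → n ≤ S.ncard) : n ≤ domNum V A := by
  have hne : {m | ∃ S : Set V, IsDomSet A S ∧ S.ncard = m}.Nonempty :=
    ⟨(Set.univ : Set V).ncard, Set.univ, domSet_univ A, rfl⟩
  obtain ⟨S, hS, hc⟩ := Nat.sInf_mem hne
  rw [domNum, ← hc]
  exact h S hS

lemma domNumC4 : domNum (Fin 4) C4Arc = 2 := by
  apply le_antisymm
  · have h : IsDomSet C4Arc ({0, 2} : Set (Fin 4)) := by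
      intro u
      fin_cases u
      · exact ⟨0, Or.inl rfl, Set.mem_insert _ _⟩
      · exact ⟨0, Or.inl rfl, Or.inr (Or.inl ⟨rfl, rfl⟩)⟩
      · exact ⟨2, Or.inr rfl, Set.mem_insert _ _⟩
      · exact ⟨0, Or.inl rfl, Or.inr (Or.inr (Or.inl ⟨rfl, rfl⟩))⟩
    have := domNum_le C4Arc h
    rwa [Set.ncard_pair (by decide : (0 : Fin 4) ≠ 2)] at this
  · apply le_domNum
    intro S hS
    obtain ⟨v, hv, h0⟩ := hS 0
    obtain ⟨w, hw, h2⟩ := hS 2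
    have hv0 : v = 0 := by
      rcases h0 with h | h
      · exact h.symm
      · rcases h with ⟨_, h⟩ | ⟨_, h⟩ | ⟨_, h⟩ | ⟨_, h⟩ <;> exact absurd h (by decide)
    have hw2 : w = 2 := by
      rcases h2 with h | h
      · exact h.symm
      · rcases h with ⟨_, h⟩ | ⟨_, h⟩ | ⟨_, h⟩ | ⟨_, h⟩ <;> exact absurd h (by decide)
    have hsub : ({0, 2} : Set (Fin 4)) ⊆ S := by
      intro x hx
      rcases hx with h | h
      · rw [h, ← hv0]; exact hv
      · rw [h, ← hw2]; exact hw
    calc 2 = ({0, 2} : Set (Fin 4)).ncard := (Set.ncard_pair (by decide)).symm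
      _ ≤ S.ncard := Set.ncard_le_ncard hsub S.toFinite

theorem stmt16 {V : Type*} [Fintype V] (A : V → V → Prop)
    (hirr : ∀ v, ¬ A v v)
    (S1 S2 : Set V) (hdisj : Disjoint S1 S2) (hunion : S1 ∪ S2 = Set.univ)
    (hd1 : IsDomSet A S1) (hd2 : IsDomSet A S2)
    (hc1 : S1.ncard = domNum V A) (hc2 : S2.ncard = domNum V A) :
    domNum (V × Fin 4) (cartArc A C4Arc) = domNum V A * domNum (Fin 4) C4Arc ∧
    domNum (V × Fin 4) (cartArc A C4Arc) = 2 * domNum V A := by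
  have hinj0 : Function.Injective (fun g : V => (g, (0 : Fin 4))) :=
    fun a b h => (Prod.mk.injEq _ _ _ _ ▸ h).1
  have hinj2 : Function.Injective (fun g : V => (g, (2 : Fin 4))) :=
    fun a b h => (Prod.mk.injEq _ _ _ _ ▸ h).1
  have key : domNum (V × Fin 4) (cartArc A C4Arc) = 2 * domNum V A := by
    apply le_antisymm
    · -- upper bound: (S1 × {0}) ∪ (S2 × {2})
      set T : Set (V × Fin 4) :=
        ((fun g => (g, (0 : Fin 4))) '' S1) ∪ ((fun g => (g, (2 : Fin 4))) '' S2) with hT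
      have hdom : IsDomSet (cartArc A C4Arc) T := by
        rintro ⟨g, c⟩
        have hg : g ∈ S1 ∪ S2 := hunion ▸ Set.mem_univ g
        fin_cases c
        · obtain ⟨v, hv, hgv⟩ := hd1 g
          refine ⟨(v, 0), Or.inl ⟨v, hv, rfl⟩, ?_⟩
          rcases hgv with h | h
          · exact h ▸ Set.mem_insert _ _
          · exact Or.inr (Or.inr ⟨rfl, h⟩)
        · rcases hg with hg | hg
          · exact ⟨(g, 0), Or.inl ⟨g, hg, rfl⟩, Or.inr (Or.inl ⟨rfl, Or.inl ⟨rfl, rfl⟩⟩)⟩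
          · exact ⟨(g, 2), Or.inr ⟨g, hg, rfl⟩,
              Or.inr (Or.inl ⟨rfl, Or.inr (Or.inr (Or.inl ⟨rfl, rfl⟩))⟩)⟩
        · obtain ⟨v, hv, hgv⟩ := hd2 g
          refine ⟨(v, 2), Or.inr ⟨v, hv, rfl⟩, ?_⟩
          rcases hgv with h | h
          · exact h ▸ Set.mem_insert _ _
          · exact Or.inr (Or.inr ⟨rfl, h⟩)
        · rcases hg with hg | hg
          · exact ⟨(g, 0), Or.inl ⟨g, hg, rfl⟩,
              Or.inr (Or.inl ⟨rfl, Or.inr (Or.inl ⟨rfl, rfl⟩)⟩)⟩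
          · exact ⟨(g, 2), Or.inr ⟨g, hg, rfl⟩,
              Or.inr (Or.inl ⟨rfl, Or.inr (Or.inr (Or.inr ⟨rfl, rfl⟩))⟩)⟩
      have hdisjT : Disjoint ((fun g => (g, (0 : Fin 4))) '' S1)
          ((fun g => (g, (2 : Fin 4))) '' S2) := by
        rw [Set.disjoint_left]
        rintro ⟨g, c⟩ ⟨a, _, ha⟩ ⟨b, _, hb⟩
        have h0 : c = 0 := (Prod.mk.injEq _ _ _ _ ▸ ha).2.symm
        have h2 : c = 2 := (Prod.mk.injEq _ _ _ _ ▸ hb).2.symm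
        exact absurd (h0 ▸ h2) (by decide)
      have hcard : T.ncard = 2 * domNum V A := by
        rw [hT, Set.ncard_union_eq hdisjT (Set.toFinite _) (Set.toFinite _),
          Set.ncard_image_of_injective _ hinj0, Set.ncard_image_of_injective _ hinj2,
          hc1, hc2]
        ring
      exact hcard ▸ domNum_le _ hdom
    · -- lower bound
      apply le_domNum
      intro T hT
      set T0 : Set V := {g | (g, (0 : Fin 4)) ∈ T} with hT0
      set T2 : Set V := {g | (g, (2 : Fin 4)) ∈ T} with hT2
      have hdom0 : IsDomSet A T0 := by
        intro g
        obtain ⟨⟨v, c⟩, hv, hmem⟩ := hT (g, 0)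
        rcases hmem with h | h
        · rw [← h] at hv
          exact ⟨g, hv, Set.mem_insert _ _⟩
        · rcases h with ⟨_, hc⟩ | ⟨hc, ha⟩
          · have hc' : C4Arc c 0 := hc
            rcases hc' with ⟨_, h⟩ | ⟨_, h⟩ | ⟨_, h⟩ | ⟨_, h⟩ <;> exact absurd h (by decide)
          · have hc' : c = 0 := hc
            subst hc'
            exact ⟨v, hv, Or.inr ha⟩
      have hdom2 : IsDomSet A T2 := by
        intro g
        obtain ⟨⟨v, c⟩, hv, hmem⟩ := hT (g, 2)
        rcases hmem with h | h
        · rw [← h] at hv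
          exact ⟨g, hv, Set.mem_insert _ _⟩
        · rcases h with ⟨_, hc⟩ | ⟨hc, ha⟩
          · have hc' : C4Arc c 2 := hc
            rcases hc' with ⟨_, h⟩ | ⟨_, h⟩ | ⟨_, h⟩ | ⟨_, h⟩ <;> exact absurd h (by decide)
          · have hc' : c = 2 := hc
            subst hc'
            exact ⟨v, hv, Or.inr ha⟩
      have hsub : ((fun g => (g, (0 : Fin 4))) '' T0) ∪ ((fun g => (g, (2 : Fin 4))) '' T2)
          ⊆ T := by
        rintro ⟨g, c⟩ (⟨a, ha, haeq⟩ | ⟨a, ha, haeq⟩) <;>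
          · obtain ⟨h1, h2⟩ := Prod.mk.injEq _ _ _ _ ▸ haeq
            exact h1 ▸ h2 ▸ ha
      have hdisjT : Disjoint ((fun g => (g, (0 : Fin 4))) '' T0)
          ((fun g => (g, (2 : Fin 4))) '' T2) := by
        rw [Set.disjoint_left]
        rintro ⟨g, c⟩ ⟨a, _, ha⟩ ⟨b, _, hb⟩
        have h0 : c = 0 := (Prod.mk.injEq _ _ _ _ ▸ ha).2.symm
        have h2 : c = 2 := (Prod.mk.injEq _ _ _ _ ▸ hb).2.symm
        exact absurd (h0 ▸ h2) (by decide)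
      calc 2 * domNum V A = domNum V A + domNum V A := by ring
        _ ≤ T0.ncard + T2.ncard :=
            Nat.add_le_add (domNum_le A hdom0) (domNum_le A hdom2)
        _ = (((fun g => (g, (0 : Fin 4))) '' T0) ∪
              ((fun g => (g, (2 : Fin 4))) '' T2)).ncard := by
            rw [Set.ncard_union_eq hdisjT (Set.toFinite _) (Set.toFinite _),
              Set.ncard_image_of_injective _ hinj0, Set.ncard_image_of_injective _ hinj2]
        _ ≤ T.ncard := Set.ncard_le_ncard hsub T.toFinite
  refine ⟨?_, key⟩
  rw [key, domNumC4]
  ring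
end
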